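/- Let d ≥ 2 and let M be a real d×d matrix. Suppose there is a nonempty open set U ⊆ ℝ^d \ {0} such that for every x ∈ U the projective orbit of x under the one-parameter group t ↦ exp(tM) is a proper subset of a projective line. Then for every nonzero x ∈ ℝ^d the projective orbit of x is a proper subset of a projective line. -/

import Mathlib

/-!
If the orbit of `x` lies in a plane `V`, differentiating at `t = 0` puts `x`, `M x` and `M² x` in
`V`, so these three vectors are dependent. Dependence is the vanishing of their Gram determinant,
an analytic function of `x`; it vanishes on the open set `U`, hence everywhere. An operator for
which `x, M x, M² x` are dependent for every `x` satisfies a global relation `M² = a + b M`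
(Kaplansky): perturbing a vector `x` with `x, M x` independent in a direction `y` shows that
`M² y - b M y - a y` lies in `span {x, M x}`, and a short computation then shows that it vanishes.
If `b² + 4a < 0`, `M` acts on each plane `span {x, M x}` as multiplication by a non-real complex
number, so every orbit meets every line of its plane, contradicting the hypothesis at a point of
`U`. Otherwise `M` has a real eigenvalue `λ`: an eigenvector `x` has its orbit in its own line,
and for any other `x` the invariant plane `span {x, M x}` contains the eigenvector
`M x - (b - λ) x`, whose line is `exp (t M)`-invariant and therefore never reached by the orbit
of `x`.
-/

/-- The projective orbit of a nonzero vector `x` under the one-parameter group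
`t ↦ exp (t M)` is a proper subset of a projective line. -/
def ProjOrbitProperSubsetOfLine (d : ℕ) (M : Matrix (Fin d) (Fin d) ℝ)
    (x : Fin d → ℝ) : Prop :=
  ∃ V : Submodule ℝ (Fin d → ℝ), Module.finrank ℝ V = 2 ∧
    (∀ t : ℝ, (NormedSpace.exp (t • M)).mulVec x ∈ V) ∧
    ∃ y ∈ V, y ≠ 0 ∧ ∀ t c : ℝ, (NormedSpace.exp (t • M)).mulVec x ≠ c • y

open Filter Topology Matrix Submodule

section LinearAlgebra

variable {K E : Type*} [Field K] [AddCommGroup E] [Module K E] {x y z : E} {W : Submodule K E}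

theorem linearIndependent_fin3_iff :
    LinearIndependent K ![x, y, z] ↔ LinearIndependent K ![x, y] ∧ z ∉ span K {x, y} := by
  rw [linearIndependent_finSucc']
  have : Fin.init ![x, y, z] = ![x, y] := by ext i; fin_cases i <;> rfl
  simp [this, Set.pair_comm, Matrix.range_cons]

theorem finrank_span_pair (h : LinearIndependent K ![x, y]) :
    Module.finrank K (span K {x, y}) = 2 := by
  have hrange : Set.range ![x, y] = {x, y} := by
    rw [Matrix.range_cons, Matrix.range_cons_empty]; rfl
  rw [← hrange, finrank_span_eq_card h, Fintype.card_fin]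

theorem not_linearIndependent_of_forall_mem {ι : Type*} [Fintype ι] [FiniteDimensional K W]
    (hW : Module.finrank K W < Fintype.card ι) {v : ι → E} (hv : ∀ i, v i ∈ W) :
    ¬ LinearIndependent K v := by
  intro hli
  have := Submodule.finrank_mono (span_le.2 (Set.range_subset_iff.2 hv))
  rw [finrank_span_eq_card hli] at this
  omega

theorem eq_zero_of_smul_mem_of_not_mem (hyW : y ∉ W) {c : K} (h : c • y ∈ W) : c = 0 := by
  by_contra hc
  exact hyW ((smul_mem_iff W hc).1 h)

end LinearAlgebra

section LocallyQuadratic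

variable {K E : Type*} [Field K] [AddCommGroup E] [Module K E] {f : Module.End K E}
  {x y w : E} {a b : K} {W : Submodule K E}

theorem Module.End.apply_apply_mem_span_of_not_linearIndependent
    (h : ¬ LinearIndependent K ![x, f x, f (f x)]) : f (f x) ∈ span K {x, f x} := by
  by_cases hx : LinearIndependent K ![x, f x]
  · exact not_not.1 fun h' => h (linearIndependent_fin3_iff.2 ⟨hx, h'⟩)
  by_cases hx0 : x = 0
  · simp [hx0]
  obtain ⟨c, hc⟩ := not_forall_not.1 fun h' => hx ((LinearIndependent.pair_iff' hx0).2 h')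
  rw [show f (f x) = c • f x by rw [← map_smul, hc]]
  exact smul_mem _ _ (subset_span (by simp))

theorem Module.End.residual_mem_span_pair_self (hx : f (f x) ∈ span K {x, f x}) :
    f (f x) - (a • x + b • f x) ∈ span K {x, f x} :=
  sub_mem hx (add_mem (smul_mem _ _ (subset_span (by simp)))
    (smul_mem _ _ (subset_span (by simp))))

theorem Module.End.apply_mem_span_pair_of_residual (hy : f (f y) ∈ span K {y, f y})
    (hyW : y ∉ W) (hwW : w ∈ W) (hw : w ≠ 0) (hres : f (f y) - (a • y + b • f y) = w) :
    f y ∈ span K {w, y} := by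
  have hw_mem : w ∈ span K {f y, y} := by
    rw [← hres, Set.pair_comm]
    exact residual_mem_span_pair_self hy
  refine mem_span_insert_exchange hw_mem fun h => ?_
  obtain ⟨c, rfl⟩ := mem_span_singleton.1 h
  exact hw (by rw [eq_zero_of_smul_mem_of_not_mem hyW hwW, zero_smul])

theorem Module.End.apply_mem_span_pair_of_apply_apply_eq (hab : f (f x) = a • x + b • f x)
    {u : E} (hu : u ∈ span K {x, f x}) : f u ∈ span K {x, f x} := by
  obtain ⟨α, β, rfl⟩ := mem_span_pair.1 hu
  exact mem_span_pair.2 ⟨β * a, α + β * b, by simp only [map_add, map_smul, hab]; module⟩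

theorem Module.End.residual_eq_zero_of_mem_span_pair (hab : f (f x) = a • x + b • f x)
    {u : E} (hu : u ∈ span K {x, f x}) : f (f u) - (a • u + b • f u) = 0 := by
  obtain ⟨α, β, rfl⟩ := mem_span_pair.1 hu
  simp only [map_add, map_smul, hab]
  module

theorem Module.End.apply_sub_smul_eq_of_root (hab : f (f x) = a • x + b • f x) {l : K}
    (hl : l * l - b * l - a = 0) : f (f x - l • x) = (b - l) • (f x - l • x) := by
  rw [map_sub, map_smul, hab]
  linear_combination (norm := module) -(hl • x)

theorem Module.End.exists_apply_eq_smul_add_smul (hfW : ∀ u ∈ W, f u ∈ W) (hyW : y ∉ W)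
    (hwW : w ∈ W) (hshift : ∀ u ∈ W, f (y + u) ∈ span K {w, y + u}) {κ l : K}
    (hfy : κ • w + l • y = f y) {u : E} (hu : u ∈ W) : ∃ c : K, f u = l • u + c • w := by
  obtain ⟨c, l', h⟩ := mem_span_pair.1 (hshift u hu)
  rw [map_add, ← hfy] at h
  have hl : l - l' = 0 := by
    refine eq_zero_of_smul_mem_of_not_mem hyW ?_
    have : (l - l') • y = (c - κ) • w + l' • u - f u := by
      linear_combination (norm := module) -h
    rw [this]
    exact sub_mem (add_mem (smul_mem _ _ hwW) (smul_mem _ _ hu)) (hfW u hu)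
  obtain rfl : l' = l := (sub_eq_zero.1 hl).symm
  exact ⟨c - κ, by linear_combination (norm := module) -h⟩

theorem Module.End.eq_zero_of_forall_apply_mem_span_pair (hx : LinearIndependent K ![x, f x])
    (hab : f (f x) = a • x + b • f x) (hyW : y ∉ span K {x, f x})
    (hwW : w ∈ span K {x, f x}) (hwy : f (f y) - (a • y + b • f y) = w)
    (hshift : ∀ u ∈ span K {x, f x}, f (y + u) ∈ span K {w, y + u}) : w = 0 := by
  set W := span K {x, f x}
  have hfW : ∀ u ∈ W, f u ∈ W := fun u => apply_mem_span_pair_of_apply_apply_eq hab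
  -- `f y = κ • w + l • y`; this makes `l` a root and `w` an eigenvector for the other root
  -- `b - l`, which is incompatible with `w = κ • (f w - (b - l) • w)` unless `w = 0`
  obtain ⟨κ, l, hfy⟩ := mem_span_pair.1 (by simpa using hshift 0 (zero_mem _))
  have hffy : f (f y) = κ • f w + l • f y := by rw [← map_smul, ← map_smul, ← map_add, hfy]
  have key : (l * l - b * l - a) • y = w - κ • f w - (l * κ - b * κ) • w := by
    linear_combination (norm := module) hwy - hffy + (l - b) • hfy
  have hroot : l * l - b * l - a = 0 := by
    refine eq_zero_of_smul_mem_of_not_mem hyW ?_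
    rw [key]
    exact sub_mem (sub_mem hwW (smul_mem _ _ (hfW w hwW))) (smul_mem _ _ hwW)
  obtain ⟨c, hc⟩ := exists_apply_eq_smul_add_smul hfW hyW hwW hshift hfy
    (subset_span (by simp) : x ∈ W)
  have hc0 : c ≠ 0 := by
    rintro rfl
    have := LinearIndependent.pair_iff.1 hx l (-1) (by rw [hc]; module)
    norm_num at this
  have hfw : f w = (b - l) • w := by
    have := apply_sub_smul_eq_of_root hab hroot
    rw [show f x - l • x = c • w by rw [hc]; module, map_smul, smul_comm] at this
    exact smul_right_injective E hc0 this
  rw [hroot, zero_smul, hfw] at key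
  linear_combination (norm := module) -key

theorem Module.End.apply_apply_eq_of_residual_mem_span
    (hf : ∀ z, f (f z) ∈ span K {z, f z}) (hx : LinearIndependent K ![x, f x])
    (hab : f (f x) = a • x + b • f x)
    (hres : ∀ y, f (f y) - (a • y + b • f y) ∈ span K {x, f x}) (y : E) :
    f (f y) = a • y + b • f y := by
  rw [← sub_eq_zero]
  by_contra hw
  obtain ⟨w, hwy⟩ : ∃ w, f (f y) - (a • y + b • f y) = w := ⟨_, rfl⟩
  rw [hwy] at hw
  have hwW : w ∈ span K {x, f x} := hwy ▸ hres y
  have hyW : y ∉ span K {x, f x} := fun h =>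
    hw (by rw [← hwy, residual_eq_zero_of_mem_span_pair hab h])
  refine hw (eq_zero_of_forall_apply_mem_span_pair hx hab hyW hwW hwy fun u hu => ?_)
  refine apply_mem_span_pair_of_residual (a := a) (b := b) (hf _)
    (fun h => hyW (by simpa using sub_mem h hu)) hwW hw ?_
  rw [map_add, map_add, ← hwy]
  linear_combination (norm := module) residual_eq_zero_of_mem_span_pair hab hu

end LocallyQuadratic

section Kaplansky

variable {E : Type*} [NormedAddCommGroup E] [NormedSpace ℝ E] [FiniteDimensional ℝ E]
  {f : Module.End ℝ E} {x : E} {a b : ℝ}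

theorem Module.End.residual_mem_span_pair_of_linearIndependent
    (hf : ∀ z, f (f z) ∈ span ℝ {z, f z}) (hx : LinearIndependent ℝ ![x, f x])
    (hab : f (f x) = a • x + b • f x) (y : E) :
    f (f y) - (a • y + b • f y) ∈ span ℝ {x, f x} := by
  set w := f (f y) - (a • y + b • f y)
  by_contra hw
  -- the residual of `x + s • y` is `s • w` and lies in `span {x + s • y, f (x + s • y)}`,
  -- which is impossible for small `s ≠ 0`: these two vectors and `w` stay independent
  have hcont : Continuous fun s : ℝ => ![x + s • y, f (x + s • y), w] := by
    have := f.continuous_of_finiteDimensional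
    refine continuous_pi fun i => ?_
    fin_cases i <;> simp <;> fun_prop
  have hnear : ∀ᶠ s in 𝓝[≠] (0 : ℝ), LinearIndependent ℝ ![x + s • y, f (x + s • y), w] :=
    ((hcont.tendsto 0).mono_left nhdsWithin_le_nhds).eventually
      (by simpa using (linearIndependent_fin3_iff.2 ⟨hx, hw⟩).eventually)
  obtain ⟨s, hs, hs0⟩ := (hnear.and self_mem_nhdsWithin).exists
  refine (linearIndependent_fin3_iff.1 hs).2 ((smul_mem_iff _ hs0).1 ?_)
  have hres : s • w = f (f (x + s • y)) - (a • (x + s • y) + b • f (x + s • y)) := by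
    simp only [w, map_add, map_smul, hab]
    module
  exact hres ▸ residual_mem_span_pair_self (hf _)

theorem Module.End.exists_mul_self_eq_of_forall_not_linearIndependent
    (hf : ∀ z, ¬ LinearIndependent ℝ ![z, f z, f (f z)]) :
    ∃ a b : ℝ, f * f = a • 1 + b • f := by
  by_cases hscalar : ∀ z, ¬ LinearIndependent ℝ ![z, f z]
  · obtain ⟨c, rfl⟩ := LinearMap.exists_eq_smul_id_of_forall_notLinearIndependent hscalar
    exact ⟨0, c, by rw [zero_smul, zero_add, smul_mul_smul_comm, one_mul, smul_smul]⟩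
  push Not at hscalar
  obtain ⟨x, hx⟩ := hscalar
  have hf' := fun z => apply_apply_mem_span_of_not_linearIndependent (hf z)
  obtain ⟨a, b, hab⟩ := mem_span_pair.1 (hf' x)
  exact ⟨a, b, LinearMap.ext <| apply_apply_eq_of_residual_mem_span hf' hx hab.symm
    (residual_mem_span_pair_of_linearIndependent hf' hx hab.symm)⟩

end Kaplansky

section AnalyticTransfer

theorem analyticAt_det {𝕜 E ι : Type*} [NontriviallyNormedField 𝕜] [NormedAddCommGroup E]
    [NormedSpace 𝕜 E] [Fintype ι] [DecidableEq ι] {A : E → Matrix ι ι 𝕜} {z : E}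
    (hA : ∀ i j, AnalyticAt 𝕜 (fun x => A x i j) z) : AnalyticAt 𝕜 (fun x => (A x).det) z := by
  simp only [det_apply, Units.smul_def, zsmul_eq_mul]
  fun_prop

theorem linearIndependent_iff_det_dotProduct_ne_zero {ι : Type*} [Fintype ι] [DecidableEq ι]
    {n : ℕ} (v : ι → Fin n → ℝ) :
    LinearIndependent ℝ v ↔ (Matrix.of fun i j => v i ⬝ᵥ v j).det ≠ 0 := by
  rw [← LinearMap.linearIndependent_iff (WithLp.linearEquiv 2 ℝ (Fin n → ℝ)).symm.toLinearMap
    (LinearEquiv.ker _), ← det_gram_ne_zero_iff_linearIndependent (𝕜 := ℝ)]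
  congr!
  ext i j
  simp [gram_apply, EuclideanSpace.inner_eq_star_dotProduct, dotProduct_comm]

theorem not_linearIndependent_of_forall_mem_isOpen {E ι : Type*} [NormedAddCommGroup E]
    [NormedSpace ℝ E] [Fintype ι] {n : ℕ} {v : E → ι → Fin n → ℝ}
    (hv : ∀ i x, AnalyticAt ℝ (fun y => v y i) x) {U : Set E} (hU : IsOpen U)
    (hne : U.Nonempty) (hdep : ∀ y ∈ U, ¬ LinearIndependent ℝ (v y)) (x : E) :
    ¬ LinearIndependent ℝ (v x) := by
  classical
  obtain ⟨u, hu⟩ := hne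
  have hg : AnalyticOnNhd ℝ (fun y => (Matrix.of fun i j => v y i ⬝ᵥ v y j).det) Set.univ :=
    fun y _ => analyticAt_det fun i j => by
      simp only [Matrix.of_apply, dotProduct]
      have hcoord : ∀ i k, AnalyticAt ℝ (fun x => v x i k) y := fun i k =>
        (ContinuousLinearMap.proj (R := ℝ) (φ := fun _ : Fin n => ℝ) k).analyticAt _
          |>.comp (hv i y)
      exact Finset.analyticAt_fun_sum _ fun k _ => (hcoord i k).mul (hcoord j k)
  have hzero := hg.eqOn_zero_of_preconnected_of_eventuallyEq_zero isPreconnected_univ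
    (Set.mem_univ u) (eventually_of_mem (hU.mem_nhds hu) fun y hy =>
      not_ne_iff.1 fun h => hdep y hy ((linearIndependent_iff_det_dotProduct_ne_zero _).2 h))
    (Set.mem_univ x)
  exact fun h => (linearIndependent_iff_det_dotProduct_ne_zero _).1 h hzero

end AnalyticTransfer

theorem Submodule.mem_of_hasDerivAt {𝕜 F : Type*} [NontriviallyNormedField 𝕜]
    [NormedAddCommGroup F] [NormedSpace 𝕜 F] {V : Submodule 𝕜 F} (hV : IsClosed (V : Set F))
    {g : 𝕜 → F} {g' : F} {t : 𝕜} (hg : ∀ s, g s ∈ V) (hd : HasDerivAt g g' t) : g' ∈ V := by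
  rw [hasDerivAt_iff_tendsto_slope] at hd
  refine hV.mem_of_tendsto hd (Eventually.of_forall fun s => ?_)
  rw [slope_def_module]
  exact V.smul_mem _ (V.sub_mem (hg s) (hg t))

theorem Complex.exists_exp_ofReal_mul_eq_ofReal_mul {ζ ξ : ℂ} (hζ : ζ.im ≠ 0) (hξ : ξ ≠ 0) :
    ∃ t c : ℝ, Complex.exp (t * ζ) = c * ξ := by
  refine ⟨ξ.arg / ζ.im, Real.exp (ξ.arg / ζ.im * ζ.re) / ‖ξ‖, ?_⟩
  have hζ' : (↑(ξ.arg / ζ.im) * ζ : ℂ) = ↑(ξ.arg / ζ.im * ζ.re) + ξ.arg * Complex.I := by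
    apply Complex.ext <;> simp [field]
  have : (‖ξ‖ : ℂ) ≠ 0 := by simpa using hξ
  calc Complex.exp (↑(ξ.arg / ζ.im) * ζ)
      = Complex.exp ↑(ξ.arg / ζ.im * ζ.re) * Complex.exp (ξ.arg * Complex.I) := by
        rw [hζ', Complex.exp_add]
    _ = ↑(Real.exp (ξ.arg / ζ.im * ζ.re) / ‖ξ‖) * (‖ξ‖ * Complex.exp (ξ.arg * Complex.I)) := by
        push_cast; field_simp
    _ = _ := by rw [Complex.norm_mul_exp_arg_mul_I]

theorem exists_algHom_complex_apply_eq {A : Type*} [Ring A] [Algebra ℝ A] {m : A} {a b : ℝ}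
    (hm : m * m = a • 1 + b • m) (hD : b ^ 2 + 4 * a < 0) :
    ∃ (φ : ℂ →ₐ[ℝ] A) (ζ : ℂ), ζ.im ≠ 0 ∧ φ ζ = m := by
  set ω := √(-(b ^ 2 + 4 * a)) / 2
  have hω : 0 < ω := half_pos (Real.sqrt_pos.2 (by linarith))
  have hω2 : ω ^ 2 = -(b ^ 2 + 4 * a) / 4 := by
    rw [div_pow, Real.sq_sqrt (by linarith)]; norm_num
  -- `J` is a complex structure, and `m = b / 2 + ω J`
  set J := ω⁻¹ • (m - (b / 2) • 1)
  have hJ : J * J = -1 := by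
    have hsq : (m - (b / 2) • 1) * (m - (b / 2) • 1) = -(ω ^ 2) • (1 : A) := by
      simp only [sub_mul, mul_sub, smul_mul_assoc, mul_smul_comm, one_mul, mul_one, hm, hω2]
      module
    rw [smul_mul_smul_comm, hsq, smul_smul, show ω⁻¹ * ω⁻¹ * -ω ^ 2 = -1 by field_simp,
      neg_one_smul]
  refine ⟨Complex.liftAux J hJ, ⟨b / 2, ω⟩, hω.ne', ?_⟩
  rw [Complex.liftAux_apply, Algebra.algebraMap_eq_smul_one]
  simp only [J, smul_smul, mul_inv_cancel₀ hω.ne']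
  module

section MatrixOrbit

attribute [local instance] Matrix.linftyOpNormedRing Matrix.linftyOpNormedAlgebra

variable {d : ℕ} {M : Matrix (Fin d) (Fin d) ℝ} {V : Submodule ℝ (Fin d → ℝ)}
  {x : Fin d → ℝ} {a b : ℝ}

theorem hasDerivAt_exp_smul_mulVec (M : Matrix (Fin d) (Fin d) ℝ) (x : Fin d → ℝ) (t : ℝ) :
    HasDerivAt (fun s : ℝ => NormedSpace.exp (s • M) *ᵥ x)
      (NormedSpace.exp (t • M) *ᵥ (M *ᵥ x)) t := by
  rw [mulVec_mulVec]
  exact (LinearMap.toContinuousLinearMap ((mulVecBilin ℝ ℝ).flip x)).hasFDerivAt.comp_hasDerivAt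
    t (hasDerivAt_exp_smul_const M t)

theorem exp_smul_mulVec_mulVec_mem (horb : ∀ t : ℝ, NormedSpace.exp (t • M) *ᵥ x ∈ V)
    (t : ℝ) : NormedSpace.exp (t • M) *ᵥ (M *ᵥ x) ∈ V :=
  V.mem_of_hasDerivAt V.closed_of_finiteDimensional horb (hasDerivAt_exp_smul_mulVec M x t)

theorem exp_smul_mulVec_mem (hMV : ∀ v ∈ V, M *ᵥ v ∈ V) (hx : x ∈ V) (t : ℝ) :
    NormedSpace.exp (t • M) *ᵥ x ∈ V := by
  have hpow : ∀ n : ℕ, (t • M) ^ n *ᵥ x ∈ V := by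
    intro n
    induction n with
    | zero => simpa using hx
    | succ n ih =>
      rw [pow_succ', ← mulVec_mulVec, smul_mulVec]
      exact V.smul_mem t (hMV _ ih)
  have hsum := (NormedSpace.exp_series_hasSum_exp' (𝕂 := ℝ) (t • M)).map
    (mulVec.addMonoidHomLeft x) (continuous_id.matrix_mulVec continuous_const)
  refine V.closed_of_finiteDimensional.mem_of_tendsto hsum
    (Eventually.of_forall fun s => sum_mem fun n _ => ?_)
  simpa [mulVec.addMonoidHomLeft, smul_mulVec] using V.smul_mem _ (hpow n)

theorem exp_neg_smul_mulVec_exp_smul_mulVec (M : Matrix (Fin d) (Fin d) ℝ) (t : ℝ)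
    (x : Fin d → ℝ) : NormedSpace.exp ((-t) • M) *ᵥ (NormedSpace.exp (t • M) *ᵥ x) = x := by
  rw [mulVec_mulVec,
    ← Matrix.exp_add_of_commute _ _ ((Commute.refl M).smul_left _ |>.smul_right _), ← add_smul,
    neg_add_cancel, zero_smul, NormedSpace.exp_zero, one_mulVec]

theorem mulVec_mem_span_singleton {μ : ℝ} (hx : M *ᵥ x = μ • x) :
    ∀ v ∈ span ℝ {x}, M *ᵥ v ∈ span ℝ {x} := by
  intro v hv
  obtain ⟨c, rfl⟩ := mem_span_singleton.1 hv
  rw [mulVec_smul, hx, smul_smul]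
  exact smul_mem _ _ (mem_span_singleton_self x)

theorem exists_exp_smul_mulVec_eq_smul (hMM : M * M = a • 1 + b • M) (hD : b ^ 2 + 4 * a < 0)
    {u y : Fin d → ℝ} (hy : y ∈ span ℝ {u, M *ᵥ u}) (hy0 : y ≠ 0) :
    ∃ t c : ℝ, NormedSpace.exp (t • M) *ᵥ u = c • y := by
  obtain ⟨φ, ζ, hζ, hφ⟩ := exists_algHom_complex_apply_eq hMM hD
  have hexp : ∀ t : ℝ, NormedSpace.exp (t • M) = φ (Complex.exp (t * ζ)) := by
    intro t
    rw [Complex.exp_eq_exp_ℂ, NormedSpace.map_exp φ φ.toLinearMap.continuous_of_finiteDimensional,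
      ← Complex.real_smul, map_smul, hφ]
    rfl
  obtain ⟨α, β, hαβ⟩ := mem_span_pair.1 hy
  have hφξ : φ (α • 1 + β • ζ) *ᵥ u = y := by
    rw [map_add, map_smul, map_smul, map_one, hφ, add_mulVec, smul_mulVec, smul_mulVec,
      one_mulVec, hαβ]
  obtain ⟨t, c, h⟩ := Complex.exists_exp_ofReal_mul_eq_ofReal_mul hζ (ξ := α • 1 + β • ζ)
    (by rintro h; rw [h, map_zero, zero_mulVec] at hφξ; exact hy0 hφξ.symm)
  refine ⟨t, c, ?_⟩
  rw [hexp, h, ← Complex.real_smul, map_smul, smul_mulVec, hφξ]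

theorem mulVec_mulVec_eq_of_mul_self_eq (hMM : M * M = a • 1 + b • M) (z : Fin d → ℝ) :
    M *ᵥ (M *ᵥ z) = a • z + b • M *ᵥ z := by
  rw [mulVec_mulVec, hMM, add_mulVec, smul_mulVec, smul_mulVec, one_mulVec]

theorem Matrix.exists_mul_self_eq_of_forall_not_linearIndependent
    (hM : ∀ z, ¬ LinearIndependent ℝ ![z, M *ᵥ z, M *ᵥ (M *ᵥ z)]) :
    ∃ a b : ℝ, M * M = a • 1 + b • M := by
  obtain ⟨a, b, h⟩ := Module.End.exists_mul_self_eq_of_forall_not_linearIndependent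
    (f := toLin' M) hM
  refine ⟨a, b, toLinAlgEquiv'.injective ?_⟩
  rw [map_mul, map_add, map_smul, map_smul, map_one]
  exact h

theorem ProjOrbitProperSubsetOfLine.two_le (h : ProjOrbitProperSubsetOfLine d M x) : 2 ≤ d := by
  obtain ⟨V, hV2, -⟩ := h
  simpa [hV2] using V.finrank_le

theorem ProjOrbitProperSubsetOfLine.not_linearIndependent
    (h : ProjOrbitProperSubsetOfLine d M x) :
    ¬ LinearIndependent ℝ ![x, M *ᵥ x, M *ᵥ (M *ᵥ x)] := by
  obtain ⟨V, hV2, horb, -⟩ := h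
  have h1 := exp_smul_mulVec_mulVec_mem horb
  have h2 := exp_smul_mulVec_mulVec_mem h1
  refine not_linearIndependent_of_forall_mem (W := V) (by simp [hV2]) fun i => ?_
  fin_cases i
  · simpa using horb 0
  · simpa using h1 0
  · simpa using h2 0

theorem not_projOrbitProperSubsetOfLine_of_discrim_neg (hMM : M * M = a • 1 + b • M)
    (hD : b ^ 2 + 4 * a < 0) : ¬ ProjOrbitProperSubsetOfLine d M x := by
  rintro ⟨V, hV2, horb, y, hyV, hy0, hmiss⟩
  have hx0 : x ≠ 0 := by
    rintro rfl
    exact hmiss 0 0 (by simp)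
  have hli : LinearIndependent ℝ ![x, M *ᵥ x] := by
    refine (LinearIndependent.pair_iff' hx0).2 fun μ hμ => ?_
    have hroot : (μ * μ - b * μ - a) • x = 0 := by
      have := mulVec_mulVec_eq_of_mul_self_eq hMM x
      rw [← hμ, mulVec_smul, ← hμ] at this
      linear_combination (norm := module) this
    have := (smul_eq_zero.1 hroot).resolve_right hx0
    nlinarith [sq_nonneg (2 * μ - b)]
  have hspan : span ℝ {x, M *ᵥ x} ≤ V := by
    rw [span_le, Set.insert_subset_iff, Set.singleton_subset_iff]
    exact ⟨by simpa using horb 0, by simpa using exp_smul_mulVec_mulVec_mem horb 0⟩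
  have hVeq := eq_of_le_of_finrank_eq hspan (by rw [finrank_span_pair hli, hV2])
  obtain ⟨t, c, h⟩ := exists_exp_smul_mulVec_eq_smul hMM hD (hVeq ▸ hyV) hy0
  exact hmiss t c h

theorem projOrbitProperSubsetOfLine_of_mulVec_eq_smul (hd : 2 ≤ d) (hx : x ≠ 0) {μ : ℝ}
    (hμ : M *ᵥ x = μ • x) : ProjOrbitProperSubsetOfLine d M x := by
  have hne : span ℝ {x} ≠ ⊤ := fun htop => by
    have := finrank_span_singleton (K := ℝ) hx
    rw [htop, finrank_top, Module.finrank_fin_fun] at this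
    omega
  obtain ⟨y, -, hy⟩ := SetLike.exists_of_lt (lt_top_iff_ne_top.2 hne)
  have hxy : LinearIndependent ℝ ![x, y] := (LinearIndependent.pair_iff' hx).2 fun c hc =>
    hy (hc ▸ smul_mem _ _ (mem_span_singleton_self x))
  have horb : ∀ t : ℝ, NormedSpace.exp (t • M) *ᵥ x ∈ span ℝ {x} :=
    exp_smul_mulVec_mem (mulVec_mem_span_singleton hμ) (mem_span_singleton_self x)
  refine ⟨span ℝ {x, y}, finrank_span_pair hxy, fun t => span_mono (by simp) (horb t), y,
    subset_span (by simp), fun h => hy (h ▸ zero_mem _), fun t c h => ?_⟩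
  have hc : c ≠ 0 := by
    rintro rfl
    apply hx
    rw [← exp_neg_smul_mulVec_exp_smul_mulVec M t x, h, zero_smul, mulVec_zero]
  exact hy ((smul_mem_iff _ hc).1 (h ▸ horb t))

theorem projOrbitProperSubsetOfLine_of_linearIndependent (hMM : M * M = a • 1 + b • M)
    (hD : 0 ≤ b ^ 2 + 4 * a) (hli : LinearIndependent ℝ ![x, M *ᵥ x]) :
    ProjOrbitProperSubsetOfLine d M x := by
  set l := (b + √(b ^ 2 + 4 * a)) / 2
  have hl : l * l = a + b * l := by
    have := Real.sq_sqrt hD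
    simp only [l]
    linear_combination this / 4
  set y := M *ᵥ x - (b - l) • x
  have hMy : M *ᵥ y = l • y := by
    simp only [y, mulVec_sub, mulVec_smul, mulVec_mulVec_eq_of_mul_self_eq hMM]
    linear_combination (norm := module) -(hl • x)
  have hinv : ∀ v ∈ span ℝ {x, M *ᵥ x}, M *ᵥ v ∈ span ℝ {x, M *ᵥ x} := fun v =>
    Module.End.apply_mem_span_pair_of_apply_apply_eq (f := toLin' M)
      (mulVec_mulVec_eq_of_mul_self_eq hMM x)
  refine ⟨span ℝ {x, M *ᵥ x}, finrank_span_pair hli,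
    exp_smul_mulVec_mem hinv (subset_span (by simp)), y,
    mem_span_pair.2 ⟨-(b - l), 1, by simp only [y]; module⟩, fun hy0 => ?_, fun t c h => ?_⟩
  · have := LinearIndependent.pair_iff.1 hli (-(b - l)) 1 (by rw [← hy0]; module)
    norm_num at this
  · have hxy := exp_smul_mulVec_mem (mulVec_mem_span_singleton hMy)
      (smul_mem _ c (mem_span_singleton_self y)) (-t)
    rw [← h, exp_neg_smul_mulVec_exp_smul_mulVec] at hxy
    obtain ⟨k, hk⟩ := mem_span_singleton.1 hxy
    obtain ⟨h1, rfl⟩ := LinearIndependent.pair_iff.1 hli (-(k * (b - l)) - 1) k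
      (by linear_combination (norm := module) hk)
    norm_num at h1

theorem projOrbitProperSubsetOfLine_of_discrim_nonneg (hd : 2 ≤ d)
    (hMM : M * M = a • 1 + b • M) (hD : 0 ≤ b ^ 2 + 4 * a) (hx : x ≠ 0) :
    ProjOrbitProperSubsetOfLine d M x := by
  by_cases hli : LinearIndependent ℝ ![x, M *ᵥ x]
  · exact projOrbitProperSubsetOfLine_of_linearIndependent hMM hD hli
  obtain ⟨μ, hμ⟩ : ∃ μ : ℝ, μ • x = M *ᵥ x :=
    not_forall_not.1 fun h => hli ((LinearIndependent.pair_iff' hx).2 h)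
  exact projOrbitProperSubsetOfLine_of_mulVec_eq_smul hd hx hμ.symm

end MatrixOrbit

theorem orbit_in_line_of_open_set_general
    (d : ℕ) (M : Matrix (Fin d) (Fin d) ℝ)
    (U : Set (Fin d → ℝ)) (hUopen : IsOpen U) (hUne : U.Nonempty)
    (h : ∀ x ∈ U, ProjOrbitProperSubsetOfLine d M x) :
    ∀ x : Fin d → ℝ, x ≠ 0 → ProjOrbitProperSubsetOfLine d M x := by
  obtain ⟨u, hu⟩ := hUne
  have hM : ∀ z, AnalyticAt ℝ (fun y => M *ᵥ y) z :=
    (LinearMap.toContinuousLinearMap M.mulVecLin).analyticAt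
  have hdep : ∀ z, ¬ LinearIndependent ℝ ![z, M *ᵥ z, M *ᵥ (M *ᵥ z)] := by
    refine not_linearIndependent_of_forall_mem_isOpen (fun i z => ?_) hUopen ⟨u, hu⟩
      fun y hy => (h y hy).not_linearIndependent
    fin_cases i
    · exact analyticAt_id
    · exact hM z
    · exact (hM _).comp (hM z)
  obtain ⟨a, b, hMM⟩ := exists_mul_self_eq_of_forall_not_linearIndependent hdep
  rcases lt_or_ge (b ^ 2 + 4 * a) 0 with hD | hD
  · exact absurd (h u hu) (not_projOrbitProperSubsetOfLine_of_discrim_neg hMM hD)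
  · exact fun x hx => projOrbitProperSubsetOfLine_of_discrim_nonneg (h u hu).two_le hMM hD hx

/-- If the orbit of every point of a nonempty open set of nonzero vectors is a proper
subset of a projective line, then so is the orbit of every nonzero vector. -/
theorem orbit_in_line_of_open_set
    (d : ℕ) (hd : 2 ≤ d) (M : Matrix (Fin d) (Fin d) ℝ)
    (U : Set (Fin d → ℝ)) (hUopen : IsOpen U) (hUne : U.Nonempty)
    (hU0 : (0 : Fin d → ℝ) ∉ U)
    (h : ∀ x ∈ U, ProjOrbitProperSubsetOfLine d M x) :
    ∀ x : Fin d → ℝ, x ≠ 0 → ProjOrbitProperSubsetOfLine d M x :=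
  orbit_in_line_of_open_set_general d M U hUopen hUne h
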